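/- Let $b$ be the symbol $h_{I'} \otimes h_{J'}$ and $\mathcal{T}^b_* = [T_2^*, [T_1^*, b]]$. If $\mathcal{T}^{h_{I'} \otimes h_{J'}}_*(h_{I''} \otimes h_{J''}) \neq 0$, then $|I'| \leq |\widehat{I''}|$ and $|J'| \leq |\widehat{J''}|$, i.e., the symbol's Haar frequency is 'smaller' (coarser) than the test function's parent scale. -/

import Mathlib

open MeasureTheory
open scoped Classical

/-- A dyadic interval `[k·2^(-n), (k+1)·2^(-n))` on the real line, encoded by its
scale `n` (so that `|I| = 2^(-n)`) and its position `k`. -/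
structure DI where
  n : ℤ
  k : ℤ

namespace DI

/-- The underlying half-open interval of a dyadic interval. -/
noncomputable def set (I : DI) : Set ℝ :=
  Set.Ico ((I.k : ℝ) * (2:ℝ) ^ (-I.n)) (((I.k : ℝ) + 1) * (2:ℝ) ^ (-I.n))

/-- The length `|I| = 2^(-n)` of a dyadic interval. -/
noncomputable def len (I : DI) : ℝ := (2:ℝ) ^ (-I.n)

/-- `I` is *even* when `|I| = 2^(-2k)` for an integer `k`. -/
def IsEven (I : DI) : Prop := Even I.n

/-- The dyadic parent `Î` of `I`. -/
def parent (I : DI) : DI := ⟨I.n - 1, Int.ediv I.k 2⟩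

/-- The left (lower) half `I₋` of `I`. -/
def left (I : DI) : DI := ⟨I.n + 1, 2 * I.k⟩

/-- The right (upper) half `I₊` of `I`. -/
def right (I : DI) : DI := ⟨I.n + 1, 2 * I.k + 1⟩

/-- The dyadic sibling of `I` (the other child of `Î`). -/
def sibling (I : DI) : DI := if I.k % 2 = 1 then ⟨I.n, I.k - 1⟩ else ⟨I.n, I.k + 1⟩

/-- `sgn (I, Î)`: equal to `+1` if `I = (Î)₊` (the right child) and `-1` if `I = (Î)₋`. -/
noncomputable def sgn (I : DI) : ℝ := if I.k % 2 = 1 then 1 else -1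

/-- Containment of dyadic intervals. -/
def Sub (I J : DI) : Prop := I.set ⊆ J.set

end DI

/-- The Haar function `h_I = |I|^{-1/2} (𝟏_{I₊} - 𝟏_{I₋})`. -/
noncomputable def haar (I : DI) : ℝ → ℝ := fun x =>
  Real.sqrt ((2:ℝ) ^ I.n) *
    (if x ∈ DI.set (DI.right I) then 1 else if x ∈ DI.set (DI.left I) then -1 else 0)

/-- The Haar coefficient `(f, h_I)`. -/
noncomputable def hcoef (f : ℝ → ℝ) (I : DI) : ℝ := ∫ x, f x * haar I x

/-- The average `⟨f⟩_I = (f, 𝟏_I/|I|)`. -/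
noncomputable def avg (f : ℝ → ℝ) (I : DI) : ℝ := (∫ x in DI.set I, f x) / DI.len I

/-- The normalized indicator `𝟏̃_I = 𝟏_I/|I|`. -/
noncomputable def nind (I : DI) : ℝ → ℝ := fun x => if x ∈ DI.set I then 1 / DI.len I else 0

/-- The dyadic shift `T`, with `T h_I = h_{I₊} - h_{I₋}` for `I` even and `T h_I = 0`
for `I` odd. -/
noncomputable def shift (f : ℝ → ℝ) : ℝ → ℝ := fun x =>
  ∑' I : DI, if DI.IsEven I then hcoef f I * (haar (DI.right I) x - haar (DI.left I) x) else 0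

/-- The adjoint dyadic shift `T*`, with `T* h_I = sgn(I, Î) h_{Î}` for `I` odd and
`T* h_I = 0` for `I` even. -/
noncomputable def shiftAdj (f : ℝ → ℝ) : ℝ → ℝ := fun x =>
  ∑' I : DI, if DI.IsEven I then 0 else hcoef f I * DI.sgn I * haar (DI.parent I) x

/-- The paraproduct `D(b, f) = ∑_I ⟨b⟩_I (f, h_I) h_I`. -/
noncomputable def Dpara (b f : ℝ → ℝ) : ℝ → ℝ := fun x =>
  ∑' I : DI, avg b I * hcoef f I * haar I x

/-- The dyadic shift `T₁` acting in the first variable. -/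
noncomputable def shift1 (F : ℝ × ℝ → ℝ) : ℝ × ℝ → ℝ := fun p => shift (fun x => F (x, p.2)) p.1

/-- The dyadic shift `T₂` acting in the second variable. -/
noncomputable def shift2 (F : ℝ × ℝ → ℝ) : ℝ × ℝ → ℝ := fun p => shift (fun y => F (p.1, y)) p.2

/-- The adjoint shift `T₁*` acting in the first variable. -/
noncomputable def shift1Adj (F : ℝ × ℝ → ℝ) : ℝ × ℝ → ℝ := fun p =>
  shiftAdj (fun x => F (x, p.2)) p.1

/-- The adjoint shift `T₂*` acting in the second variable. -/
noncomputable def shift2Adj (F : ℝ × ℝ → ℝ) : ℝ × ℝ → ℝ := fun p =>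
  shiftAdj (fun y => F (p.1, y)) p.2

/-- The repeated commutator `𝒯^b = [T₂,[T₁,b]] = T₂T₁b· − T₂ b T₁ − T₁ b T₂ + b T₁T₂`. -/
noncomputable def repComm (b F : ℝ × ℝ → ℝ) : ℝ × ℝ → ℝ := fun p =>
  shift2 (shift1 (fun q => b q * F q)) p - shift2 (fun q => b q * shift1 F q) p
    - shift1 (fun q => b q * shift2 F q) p + b p * shift1 (shift2 F) p

/-- The repeated commutator with the adjoint shifts, `𝒯^b_* = [T₂*,[T₁*,b]]`. -/
noncomputable def repCommAdj (b F : ℝ × ℝ → ℝ) : ℝ × ℝ → ℝ := fun p =>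
  shift2Adj (shift1Adj (fun q => b q * F q)) p - shift2Adj (fun q => b q * shift1Adj F q) p
    - shift1Adj (fun q => b q * shift2Adj F q) p + b p * shift1Adj (shift2Adj F) p

/-- The bi-parameter Haar coefficient `(b, h_I ⊗ h_J)`. -/
noncomputable def hcoef2 (b : ℝ × ℝ → ℝ) (I J : DI) : ℝ :=
  ∫ p : ℝ × ℝ, b p * haar I p.1 * haar J p.2

/-- A dyadic rectangle `R = I × J` as a subset of the plane. -/
noncomputable def dRect (R : DI × DI) : Set (ℝ × ℝ) := DI.set R.1 ×ˢ DI.set R.2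

/-- The strong dyadic maximal function `M_s^d`. -/
noncomputable def strongMax (f : ℝ × ℝ → ℝ) (p : ℝ × ℝ) : ℝ :=
  sSup {r : ℝ | ∃ R : DI × DI, p ∈ dRect R ∧
    r = (∫ q in dRect R, |f q|) / (DI.len R.1 * DI.len R.2)}

/-- The enlargement `U = {M_s^d 𝟏_{U₀} ≥ 1/16}` of a set `U₀`. -/
noncomputable def enlarge (U0 : Set (ℝ × ℝ)) : Set (ℝ × ℝ) :=
  {p | (1:ℝ)/16 ≤ strongMax (U0.indicator fun _ => (1:ℝ)) p}

/-!
For tensor symbols and tensor test functions the bi-parameter commutator factors as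
`𝒯^{b₁ ⊗ b₂}_* (f₁ ⊗ f₂) = [T*, b₁] f₁ ⊗ [T*, b₂] f₂`, so it suffices to show that the
one-parameter commutator `[T*, h_{I'}] h_{I''}` vanishes when `|I'| > |Î''|`. A mean-zero function
supported on `K` has nonzero Haar coefficients only on dyadic subintervals of `K`, so its image
under `T*` is supported on `K̂`. If `|I'| > |Î''|`, then `h_{I'}` is constant on `Î''`, and
therefore multiplication by `h_{I'}` commutes with `T*` on `h_{I''}`.
-/

open Function

lemma floor_mul_two_zpow_of_le (x : ℝ) {m n : ℤ} (h : m ≤ n) :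
    ⌊x * 2 ^ m⌋ = ⌊x * 2 ^ n⌋ / 2 ^ (n - m).toNat := by
  have hpow : (2 : ℝ) ^ n = 2 ^ m * ((2 ^ (n - m).toNat : ℕ) : ℝ) := by
    rw [Nat.cast_pow, Nat.cast_ofNat, ← zpow_natCast, ← zpow_add₀ two_ne_zero]
    congr 1
    omega
  have hx : x * 2 ^ m = x * 2 ^ n / ((2 ^ (n - m).toNat : ℕ) : ℝ) := by
    rw [hpow, ← mul_assoc, mul_div_assoc, div_self (by positivity), mul_one]
  rw [hx, Int.floor_div_natCast]
  push_cast
  rfl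

namespace DI

lemma mem_set_iff {I : DI} {x : ℝ} : x ∈ I.set ↔ ⌊x * 2 ^ I.n⌋ = I.k := by
  have hpos : (0 : ℝ) < 2 ^ I.n := zpow_pos two_pos _
  rw [set, Set.mem_Ico, Int.floor_eq_iff, zpow_neg, ← div_eq_mul_inv, ← div_eq_mul_inv,
    div_le_iff₀ hpos, lt_div_iff₀ hpos]

lemma measurableSet_set (I : DI) : MeasurableSet I.set := measurableSet_Ico

lemma set_nonempty (I : DI) : I.set.Nonempty :=
  ⟨I.k * 2 ^ (-I.n), mem_set_iff.2 (by
    rw [zpow_neg, inv_mul_cancel_right₀ (zpow_ne_zero _ two_ne_zero), Int.floor_intCast])⟩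

lemma floor_eq_of_mem {K : DI} {m : ℤ} (hm : m ≤ K.n) {x y : ℝ} (hx : x ∈ K.set)
    (hy : y ∈ K.set) : ⌊x * 2 ^ m⌋ = ⌊y * 2 ^ m⌋ := by
  rw [floor_mul_two_zpow_of_le x hm, floor_mul_two_zpow_of_le y hm, mem_set_iff.1 hx,
    mem_set_iff.1 hy]

lemma set_subset_of_mem {I K : DI} (h : I.n ≤ K.n) {x : ℝ} (hxI : x ∈ I.set)
    (hxK : x ∈ K.set) : K.set ⊆ I.set := fun _ hy =>
  mem_set_iff.2 ((floor_eq_of_mem h hy hxK).trans (mem_set_iff.1 hxI))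

lemma set_subset_of_ediv {I K : DI} (h : I.n ≤ K.n) (hk : K.k / 2 ^ (K.n - I.n).toNat = I.k) :
    K.set ⊆ I.set := fun x hx => by
  rw [mem_set_iff] at hx ⊢
  rw [floor_mul_two_zpow_of_le x h, hx, hk]

lemma right_set_subset (I : DI) : I.right.set ⊆ I.set :=
  set_subset_of_ediv (by simp [right]) (by simp [right]; omega)

lemma left_set_subset (I : DI) : I.left.set ⊆ I.set :=
  set_subset_of_ediv (by simp [left]) (by simp [left])

lemma set_subset_parent (I : DI) : I.set ⊆ I.parent.set :=
  set_subset_of_ediv (by simp [parent]) (by simp [parent]; rfl)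

lemma len_lt_len_iff {I K : DI} : I.len < K.len ↔ K.n < I.n := by
  rw [len, len, zpow_lt_zpow_iff_right₀ one_lt_two, neg_lt_neg_iff]

end DI

lemma support_haar_subset (I : DI) : support (haar I) ⊆ I.set := by
  intro x hx
  by_cases hr : x ∈ I.right.set
  · exact I.right_set_subset hr
  by_cases hl : x ∈ I.left.set
  · exact I.left_set_subset hl
  simp [haar, hr, hl] at hx

lemma haar_eq_of_mem {I K : DI} (h : I.n < K.n) {x y : ℝ} (hx : x ∈ K.set) (hy : y ∈ K.set) :
    haar I x = haar I y := by
  have hfloor := DI.floor_eq_of_mem (show I.n + 1 ≤ K.n by omega) hx hy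
  simp only [haar, DI.mem_set_iff, DI.right, DI.left, hfloor]

lemma integral_haar (I : DI) : ∫ x, haar I x = 0 := by
  have hdisj : Disjoint I.right.set I.left.set := by
    rw [Set.disjoint_left]
    intro x hr hl
    simp only [DI.mem_set_iff, DI.right, DI.left] at hr hl
    omega
  have hhaar : haar I = fun x =>
      √(2 ^ I.n) * (I.right.set.indicator 1 x - I.left.set.indicator 1 x) := by
    funext x
    by_cases hr : x ∈ I.right.set
    · simp [haar, hr, Set.disjoint_left.1 hdisj hr]
    · by_cases hl : x ∈ I.left.set <;> simp [haar, hr, hl]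
  have hint (J : DI) : Integrable (J.set.indicator (1 : ℝ → ℝ)) :=
    (integrable_indicator_iff J.measurableSet_set).2 (integrableOn_const measure_Ico_lt_top.ne)
  have hvol : volume I.right.set = volume I.left.set := by
    simp only [DI.set, DI.right, DI.left, Real.volume_Ico]
    push_cast
    ring_nf
  rw [hhaar, integral_const_mul, integral_sub (hint _) (hint _),
    integral_indicator_one I.right.measurableSet_set,
    integral_indicator_one I.left.measurableSet_set,
    measureReal_def, measureReal_def, hvol, sub_self, mul_zero]

lemma hcoef_eq_zero_of_lt {f : ℝ → ℝ} {I K : DI} (hf : support f ⊆ K.set)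
    (hf0 : ∫ x, f x = 0) (h : I.n < K.n) : hcoef f I = 0 := by
  obtain ⟨x₀, hx₀⟩ := K.set_nonempty
  have hconst : (fun x => f x * haar I x) = fun x => haar I x₀ * f x := by
    funext x
    by_cases hx : x ∈ support f
    · rw [haar_eq_of_mem h (hf hx) hx₀, mul_comm]
    · simp [notMem_support.1 hx]
  rw [hcoef, hconst, integral_const_mul, hf0, mul_zero]

lemma set_subset_of_hcoef_ne_zero {f : ℝ → ℝ} {I K : DI} (hf : support f ⊆ K.set)
    (hf0 : ∫ x, f x = 0) (h : hcoef f I ≠ 0) : I.set ⊆ K.set := by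
  obtain ⟨y, hy⟩ : ∃ y, f y * haar I y ≠ 0 := by
    by_contra! hzero
    exact h (by simp [hcoef, hzero])
  rcases le_or_gt K.n I.n with hKI | hIK
  · exact DI.set_subset_of_mem hKI (hf (left_ne_zero_of_mul hy))
      (support_haar_subset I (right_ne_zero_of_mul hy))
  · exact absurd (hcoef_eq_zero_of_lt hf hf0 hIK) h

lemma hcoef_const_mul (a : ℝ) (f : ℝ → ℝ) (I : DI) :
    hcoef (fun t => a * f t) I = a * hcoef f I := by
  simp only [hcoef, mul_assoc, integral_const_mul]

lemma shiftAdj_const_mul (a : ℝ) (f : ℝ → ℝ) :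
    shiftAdj (fun t => a * f t) = fun x => a * shiftAdj f x := by
  funext x
  simp only [shiftAdj, hcoef_const_mul, ← tsum_mul_left]
  congr 1 with I
  split_ifs <;> ring

lemma shiftAdj_mul_const (f : ℝ → ℝ) (a : ℝ) :
    shiftAdj (fun t => f t * a) = fun x => shiftAdj f x * a := by
  simpa only [mul_comm _ a] using shiftAdj_const_mul a f

/-- Only the odd dyadic subintervals `I ⊆ K` contribute to `T* f`, and each contributes a multiple
of `h_Î` with `Î ⊆ K̂`. -/
lemma support_shiftAdj_subset {f : ℝ → ℝ} {K : DI} (hf : support f ⊆ K.set)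
    (hf0 : ∫ x, f x = 0) : support (shiftAdj f) ⊆ K.parent.set := by
  refine support_subset_iff'.2 fun x hx => (tsum_congr fun I => ?_).trans tsum_zero
  split_ifs
  · rfl
  by_cases hI : hcoef f I = 0
  · simp [hI]
  have hIK := set_subset_of_hcoef_ne_zero hf hf0 hI
  have hKI : K.n ≤ I.n := not_lt.1 fun h => hI (hcoef_eq_zero_of_lt hf hf0 h)
  obtain ⟨y, hy⟩ := I.set_nonempty
  have hparent : I.parent.set ⊆ K.parent.set :=
    DI.set_subset_of_mem (by simp only [DI.parent]; omega)
      (K.set_subset_parent (hIK hy)) (I.set_subset_parent hy)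
  simp [notMem_support.1 fun hx' => hx (hparent (support_haar_subset _ hx'))]

lemma shiftAdj_mul_of_const_on_parent {f g : ℝ → ℝ} {K : DI} (hf : support f ⊆ K.set)
    (hf0 : ∫ x, f x = 0) (hg : ∀ x ∈ K.parent.set, ∀ y ∈ K.parent.set, g x = g y) :
    shiftAdj (fun t => g t * f t) = fun x => g x * shiftAdj f x := by
  obtain ⟨x₀, hx₀⟩ := K.set_nonempty
  have hx₀' := K.set_subset_parent hx₀
  have hgf : (fun t => g t * f t) = fun t => g x₀ * f t := by
    funext t
    by_cases ht : t ∈ support f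
    · rw [hg t (K.set_subset_parent (hf ht)) x₀ hx₀']
    · simp [notMem_support.1 ht]
  rw [hgf, shiftAdj_const_mul]
  funext x
  by_cases hx : x ∈ K.parent.set
  · rw [hg x hx x₀ hx₀']
  · simp [notMem_support.1 fun hx' => hx (support_shiftAdj_subset hf hf0 hx')]

noncomputable def shiftAdjComm (b f : ℝ → ℝ) : ℝ → ℝ := fun x =>
  shiftAdj (fun t => b t * f t) x - b x * shiftAdj f x

lemma shiftAdjComm_haar_eq_zero {I' I'' : DI} (h : I''.parent.len < I'.len) :
    shiftAdjComm (haar I') (haar I'') = 0 := by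
  have hcoarse : I'.n < I''.parent.n := DI.len_lt_len_iff.1 h
  funext x
  rw [shiftAdjComm, shiftAdj_mul_of_const_on_parent (support_haar_subset I'') (integral_haar I'')
    fun _ hy _ hz => haar_eq_of_mem hcoarse hy hz, sub_self, Pi.zero_apply]

noncomputable def tensor (u v : ℝ → ℝ) : ℝ × ℝ → ℝ := fun p => u p.1 * v p.2

lemma tensor_mul_tensor (u v u' v' : ℝ → ℝ) :
    (fun q => tensor u v q * tensor u' v' q) =
      tensor (fun t => u t * u' t) (fun t => v t * v' t) := by
  funext q
  simp only [tensor]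
  ring

lemma shift1Adj_tensor (u v : ℝ → ℝ) : shift1Adj (tensor u v) = tensor (shiftAdj u) v :=
  funext fun p => congrFun (shiftAdj_mul_const u (v p.2)) p.1

lemma shift2Adj_tensor (u v : ℝ → ℝ) : shift2Adj (tensor u v) = tensor u (shiftAdj v) :=
  funext fun p => congrFun (shiftAdj_const_mul (u p.1) v) p.2

lemma repCommAdj_tensor (b₁ b₂ f₁ f₂ : ℝ → ℝ) :
    repCommAdj (tensor b₁ b₂) (tensor f₁ f₂) =
      tensor (shiftAdjComm b₁ f₁) (shiftAdjComm b₂ f₂) := by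
  unfold repCommAdj
  simp only [tensor_mul_tensor, shift1Adj_tensor, shift2Adj_tensor]
  funext p
  simp only [tensor, shiftAdjComm]
  ring

lemma ne_zero_and_ne_zero_of_tensor_ne_zero {u v : ℝ → ℝ} (h : tensor u v ≠ 0) :
    u ≠ 0 ∧ v ≠ 0 := by
  constructor <;> rintro rfl <;> exact h (funext fun p => by simp [tensor])

/-- **The symbol is "smaller" than the test function:** if
`𝒯^{h_{I'} ⊗ h_{J'}}_* (h_{I''} ⊗ h_{J''}) ≠ 0` then `|I'| ≤ |Î''|` and `|J'| ≤ |Ĵ''|`. -/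
theorem stmt9 (I' J' I'' J'' : DI)
    (h : repCommAdj (fun p => haar I' p.1 * haar J' p.2)
        (fun p => haar I'' p.1 * haar J'' p.2) ≠ fun _ => 0) :
    DI.len I' ≤ DI.len (DI.parent I'') ∧ DI.len J' ≤ DI.len (DI.parent J'') := by
  have htensor : tensor (shiftAdjComm (haar I') (haar I'')) (shiftAdjComm (haar J') (haar J''))
      ≠ 0 := by
    rw [← repCommAdj_tensor]
    exact h
  obtain ⟨hI, hJ⟩ := ne_zero_and_ne_zero_of_tensor_ne_zero htensor
  exact ⟨not_lt.1 (hI ∘ shiftAdjComm_haar_eq_zero), not_lt.1 (hJ ∘ shiftAdjComm_haar_eq_zero)⟩
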